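/- arXiv:1510.07584 — 3 statements merged into one kernel-verified Lean document; each statement's English description precedes it below -/
import Mathlib

section
/- For every integer n ≥ 8 there exist triangulations S and T of size n such that every geodesic S = S_0, S_1, …, S_k = T from S to T in the associahedron graph satisfies conflicts(S_1, T) > conflicts(S_0, T); that is, every geodesic from S to T begins with an edge flip that strictly increases the number of conflicts with T. -/
/-- Two chords `e = {e.1, e.2}` and `f = {f.1, f.2}` (each written with first
coordinate smaller) of a convex polygon cross. -/
def Crosses (e f : ℕ × ℕ) : Prop :=
  (e.1 < f.1 ∧ f.1 < e.2 ∧ e.2 < f.2) ∨ (f.1 < e.1 ∧ e.1 < f.2 ∧ f.2 < e.2)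

instance (e f : ℕ × ℕ) : Decidable (Crosses e f) := by
  unfold Crosses; exact inferInstance

/-- `e` is a diagonal of the convex `(n+2)`-gon with vertices `0, 1, …, n+1`
(in order), i.e. a chord joining two non-adjacent vertices, recorded with
smaller endpoint first. -/
def IsDiagonal (n : ℕ) (e : ℕ × ℕ) : Prop :=
  e.1 < e.2 ∧ e.2 ≤ n + 1 ∧ e.1 + 1 < e.2 ∧ ¬(e.1 = 0 ∧ e.2 = n + 1)

/-- A triangulation of size `n`: a set of `n - 1` pairwise non-crossing
diagonals of the `(n+2)`-gon (dividing it into `n` triangles). -/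
def IsTriangulation (n : ℕ) (S : Finset (ℕ × ℕ)) : Prop :=
  S.card = n - 1 ∧ (∀ e ∈ S, IsDiagonal n e) ∧ ∀ e ∈ S, ∀ f ∈ S, ¬ Crosses e f

/-- The number of conflicts between `S` and `T`: the number of pairs
`(s, t)` with `s ∈ S`, `t ∈ T` such that `s` and `t` cross. -/
def conflicts (S T : Finset (ℕ × ℕ)) : ℕ :=
  ((S ×ˢ T).filter fun p => Crosses p.1 p.2).card

/-- `S` and `T` are triangulations of size `n` differing by a single edge
flip: exactly one diagonal of `S` is replaced by one other diagonal. -/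
def FlipAdj (n : ℕ) (S T : Finset (ℕ × ℕ)) : Prop :=
  IsTriangulation n S ∧ IsTriangulation n T ∧ (S \ T).card = 1 ∧ (T \ S).card = 1

/-- `f 0, f 1, …, f k` is a path `S = f 0, …, f k = T` in the associahedron
graph of size `n` (consecutive triangulations differ by an edge flip). -/
def IsFlipPath (n k : ℕ) (f : ℕ → Finset (ℕ × ℕ)) (S T : Finset (ℕ × ℕ)) : Prop :=
  f 0 = S ∧ f k = T ∧ ∀ i < k, FlipAdj n (f i) (f (i + 1))

/-- The flip distance `d(S,T)`: the least length of a path from `S` to `T`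
in the associahedron graph of size `n`. -/
noncomputable def flipDist (n : ℕ) (S T : Finset (ℕ × ℕ)) : ℕ :=
  sInf {k | ∃ f, IsFlipPath n k f S T}

/-- A geodesic from `S` to `T`: a path in the associahedron graph whose
length `k` equals the distance `d(S,T)`. -/
def IsGeodesic (n k : ℕ) (f : ℕ → Finset (ℕ × ℕ)) (S T : Finset (ℕ × ℕ)) : Prop :=
  IsFlipPath n k f S T ∧ k = flipDist n S T

/-- An edge `e ∈ S`, `e ∉ T` is one-off with respect to `T` if flipping `e`
in `S` directly produces an edge of `T \ S`. -/
def OneOff (n : ℕ) (S T : Finset (ℕ × ℕ)) (e : ℕ × ℕ) : Prop :=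
  e ∈ S ∧ e ∉ T ∧ ∃ e' ∈ T, e' ∉ S ∧ IsTriangulation n (insert e' (S.erase e))

/-!
In the decagon take the disjoint triangulations `S = decagonS` and `T = decagonT`. A flip changes
`#(· \ T)` by at most one, so a path of length `#(U \ T)` from `U` inserts an edge of `T` at every
step and cannot leave a family of triangulations closed under such flips. The flips of `S` that do
not increase the conflicts with `T` lead into such a family avoiding `T` (`decagonTrap`, which
contains `S`), so `d(S, T) = #(S \ T) + 1 = 8`. A geodesic can therefore afford a single flip not
inserting an edge of `T`, and it must spend it on its first step, since every edge of `T` crosses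
two edges of `S`; by the above, that flip increases the conflicts. For larger `n` both
triangulations are completed by the common fan of diagonals `(0, j)`, `9 ≤ j ≤ n`, which crosses
nothing in the decagon `0, …, 9`.
-/

open Finset

instance (n : ℕ) : DecidablePred (IsDiagonal n) := fun _ => by
  unfold IsDiagonal; infer_instance

instance (n : ℕ) : DecidablePred (IsTriangulation n) := fun _ => by
  unfold IsTriangulation; infer_instance

instance (n : ℕ) (S T : Finset (ℕ × ℕ)) : Decidable (FlipAdj n S T) := by
  unfold FlipAdj; infer_instance

section Conflicts

variable {S T F : Finset (ℕ × ℕ)}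

theorem conflicts_union_of_disjoint {A B : Finset (ℕ × ℕ)} (h : Disjoint A B)
    (T : Finset (ℕ × ℕ)) : conflicts (A ∪ B) T = conflicts A T + conflicts B T := by
  rw [conflicts, conflicts, conflicts, union_product, filter_union, card_union_of_disjoint]
  exact disjoint_filter_filter (disjoint_product.2 (Or.inl h))

theorem conflicts_insert {x : ℕ × ℕ} (hx : x ∉ S) (T : Finset (ℕ × ℕ)) :
    conflicts (insert x S) T = conflicts {x} T + conflicts S T := by
  rw [insert_eq, conflicts_union_of_disjoint (disjoint_singleton_left.2 hx)]

theorem conflicts_insert_erase_add {e e' : ℕ × ℕ} (he : e ∈ S) (he' : e' ∉ S) :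
    conflicts (insert e' (S.erase e)) T + conflicts {e} T =
      conflicts S T + conflicts {e'} T := by
  have hS := conflicts_insert (notMem_erase e S) T
  rw [insert_erase he] at hS
  rw [conflicts_insert (fun h => he' (mem_of_mem_erase h)), hS]
  ring

theorem conflicts_union_right_of_not_crosses (h : ∀ s ∈ S, ∀ t ∈ F, ¬ Crosses s t) :
    conflicts S (F ∪ T) = conflicts S T := by
  have hF : (S ×ˢ F).filter (fun p => Crosses p.1 p.2) = ∅ :=
    filter_eq_empty_iff.2 fun p hp => h p.1 (mem_product.1 hp).1 p.2 (mem_product.1 hp).2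
  rw [conflicts, conflicts, product_union, filter_union, hF, empty_union]

end Conflicts

section Flips

variable {n : ℕ} {S T U W : Finset (ℕ × ℕ)}

theorem card_sdiff_insert_erase_add {e e' : ℕ × ℕ} (he : e ∈ S) (he' : e' ∉ S) :
    #(insert e' (S.erase e) \ T) + (if e ∈ T then 0 else 1) =
      #(S \ T) + (if e' ∈ T then 0 else 1) := by
  have herase : #((S \ T).erase e) + (if e ∈ T then 0 else 1) = #(S \ T) := by
    split_ifs with heT
    · rw [erase_eq_of_notMem fun h => (mem_sdiff.1 h).2 heT, add_zero]
    · exact card_erase_add_one (mem_sdiff.2 ⟨he, heT⟩)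
  by_cases he'T : e' ∈ T
  · rw [insert_sdiff_of_mem _ he'T, erase_sdiff_comm, if_pos he'T]
    omega
  · rw [insert_sdiff_of_notMem _ he'T, erase_sdiff_comm, if_neg he'T,
      card_insert_of_notMem fun h => he' (mem_sdiff.1 (mem_of_mem_erase h)).1]
    omega

theorem notMem_and_mem_of_card_sdiff_insert_erase_lt {e e' : ℕ × ℕ} (he : e ∈ S) (he' : e' ∉ S)
    (hlt : #(insert e' (S.erase e) \ T) < #(S \ T)) :
    e ∉ T ∧ e' ∈ T ∧ #(insert e' (S.erase e) \ T) + 1 = #(S \ T) := by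
  have h := card_sdiff_insert_erase_add (T := T) he he'
  by_cases heT : e ∈ T <;> by_cases he'T : e' ∈ T <;>
    simp only [heT, he'T, if_true, if_false, not_true, not_false_eq_true, true_and] at h ⊢ <;>
    omega

theorem FlipAdj.exists_eq_insert_erase (h : FlipAdj n U W) :
    ∃ e ∈ U, ∃ e' ∉ U, W = insert e' (U.erase e) := by
  obtain ⟨e, he⟩ := card_eq_one.1 h.2.2.1
  obtain ⟨e', he'⟩ := card_eq_one.1 h.2.2.2
  have heU : e ∈ U := (mem_sdiff.1 (he ▸ mem_singleton_self e)).1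
  have he'U : e' ∉ U := (mem_sdiff.1 (he' ▸ mem_singleton_self e')).2
  refine ⟨e, heU, e', he'U, ?_⟩
  rw [← sdiff_union_inter W U, he', inter_comm, ← sdiff_sdiff_self_left, he,
    sdiff_singleton_eq_erase, ← insert_eq]

theorem FlipAdj.card_sdiff_le (h : FlipAdj n U W) : #(U \ T) ≤ #(W \ T) + 1 := by
  obtain ⟨e, he, e', he', rfl⟩ := h.exists_eq_insert_erase
  have := card_sdiff_insert_erase_add (T := T) he he'
  split_ifs at this <;> omega

theorem IsFlipPath.tail {k : ℕ} {f : ℕ → Finset (ℕ × ℕ)} (h : IsFlipPath n (k + 1) f S T) :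
    IsFlipPath n k (fun i => f (i + 1)) (f 1) T :=
  ⟨rfl, h.2.1, fun i hi => h.2.2 (i + 1) (by omega)⟩

theorem IsFlipPath.flipAdj_zero {k : ℕ} {f : ℕ → Finset (ℕ × ℕ)}
    (h : IsFlipPath n (k + 1) f S T) : FlipAdj n S (f 1) :=
  h.1 ▸ h.2.2 0 k.succ_pos

theorem IsFlipPath.card_sdiff_le {k : ℕ} {f : ℕ → Finset (ℕ × ℕ)} (h : IsFlipPath n k f S T) :
    #(S \ T) ≤ k := by
  induction k generalizing S f with
  | zero => simp [← h.1, h.2.1]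
  | succ k ih =>
    have := h.flipAdj_zero.card_sdiff_le (T := T)
    have := ih h.tail
    omega

theorem not_isFlipPath_card_sdiff_of_closed {B : Set (Finset (ℕ × ℕ))} (hT : T ∉ B)
    (hB : ∀ U ∈ B, ∀ e ∈ U, e ∉ T → ∀ e' ∈ T, e' ∉ U →
      IsTriangulation n (insert e' (U.erase e)) → insert e' (U.erase e) ∈ B)
    (hU : U ∈ B) (f : ℕ → Finset (ℕ × ℕ)) : ¬ IsFlipPath n #(U \ T) f U T := by
  generalize hk : #(U \ T) = k
  induction k generalizing U f with
  | zero => exact fun h => hT (h.2.1 ▸ h.1 ▸ hU)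
  | succ k ih =>
    intro h
    have hadj := h.flipAdj_zero
    obtain ⟨e, he, e', he', hW⟩ := hadj.exists_eq_insert_erase
    have hle := h.tail.card_sdiff_le
    rw [hW] at hle
    obtain ⟨heT, he'T, hcard⟩ :=
      notMem_and_mem_of_card_sdiff_insert_erase_lt (T := T) he he' (by omega)
    exact ih (hB U hU e he heT e' he'T he' (hW ▸ hadj.2.1)) _ (by omega) (hW ▸ h.tail)

theorem notMem_of_crosses_two (hW : ∀ x ∈ W, ∀ y ∈ W, ¬ Crosses x y) (hSW : #(S \ W) ≤ 1)
    {a b t : ℕ × ℕ} (ha : a ∈ S) (hb : b ∈ S) (hab : a ≠ b) (hat : Crosses a t)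
    (hbt : Crosses b t) : t ∉ W := by
  intro ht
  have hpair : {a, b} ⊆ S \ W := by
    intro x hx
    rcases mem_insert.1 hx with rfl | hx
    · exact mem_sdiff.2 ⟨ha, fun hx => hW x hx t ht hat⟩
    · rw [mem_singleton.1 hx]
      exact mem_sdiff.2 ⟨hb, fun hx => hW b hx t ht hbt⟩
  have := card_le_card hpair
  rw [card_pair hab] at this
  omega

end Flips

section Fan

def fan (m n : ℕ) : Finset (ℕ × ℕ) := (Icc (m + 1) n).image fun j => (0, j)

variable {m n : ℕ} {p q : ℕ × ℕ} {A B : Finset (ℕ × ℕ)}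

theorem mem_fan : p ∈ fan m n ↔ p.1 = 0 ∧ m + 1 ≤ p.2 ∧ p.2 ≤ n := by
  obtain ⟨a, b⟩ := p
  simp only [fan, mem_image, mem_Icc, Prod.mk.injEq]
  constructor
  · rintro ⟨j, hj, rfl, rfl⟩
    exact ⟨rfl, hj⟩
  · rintro ⟨rfl, hb⟩
    exact ⟨b, hb, rfl, rfl⟩

theorem card_fan (m n : ℕ) : #(fan m n) = n - m := by
  rw [fan, card_image_of_injective _ (Prod.mk_right_injective 0), Nat.card_Icc]
  omega

theorem not_crosses_fan (hp : p ∈ fan m n) (hq : q.1 = 0 ∨ q.2 ≤ m + 1) :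
    ¬ Crosses p q ∧ ¬ Crosses q p := by
  rw [mem_fan] at hp
  constructor <;> rintro (⟨h₁, h₂, h₃⟩ | ⟨h₁, h₂, h₃⟩) <;> omega

theorem IsDiagonal.notMem_fan (hq : IsDiagonal m q) : q ∉ fan m n := by
  rw [mem_fan]
  obtain ⟨-, h₂, -, h₄⟩ := hq
  omega

theorem disjoint_fan (hA : ∀ p ∈ A, IsDiagonal m p) : Disjoint (fan m n) A :=
  disjoint_right.2 fun p hp => (hA p hp).notMem_fan

theorem fan_union_sdiff_fan_union (hA : ∀ p ∈ A, IsDiagonal m p) :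
    (fan m n ∪ A) \ (fan m n ∪ B) = A \ B := by
  rw [union_sdiff_distrib, sdiff_eq_empty_iff_subset.2 subset_union_left, empty_union,
    sdiff_union_distrib, sdiff_eq_self_of_disjoint (disjoint_fan hA).symm,
    inter_eq_right.2 sdiff_subset]

theorem eq_of_fan_union_eq (hA : ∀ p ∈ A, IsDiagonal m p) (hB : ∀ p ∈ B, IsDiagonal m p)
    (h : fan m n ∪ A = fan m n ∪ B) : A = B := by
  have hAB := fan_union_sdiff_fan_union (n := n) (B := B) hA
  have hBA := fan_union_sdiff_fan_union (n := n) (B := A) hB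
  rw [h, _root_.sdiff_self, eq_comm, sdiff_eq_bot_iff] at hAB hBA
  exact le_antisymm hAB hBA

theorem IsDiagonal.of_not_crosses_fan (hp : IsDiagonal n p)
    (hpf : p ∉ fan m n) (hc : ∀ q ∈ fan m n, ¬ Crosses q p) : IsDiagonal m p := by
  obtain ⟨a, b⟩ := p
  simp only [IsDiagonal, mem_fan] at hp hpf ⊢
  refine ⟨hp.1, ?_, hp.2.2.1, fun ⟨ha, hb⟩ => hpf ⟨ha, by omega, by omega⟩⟩
  by_contra! hb
  rcases Nat.eq_zero_or_pos a with rfl | ha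
  · exact hpf ⟨rfl, by omega, by omega⟩
  · exact hc (0, b - 1) (mem_fan.2 ⟨rfl, by omega, by omega⟩) (Or.inl ⟨ha, by omega, by omega⟩)

theorem IsTriangulation.fan_union (hA : IsTriangulation m A) (hm : 1 ≤ m) (hmn : m ≤ n) :
    IsTriangulation n (fan m n ∪ A) := by
  obtain ⟨hcard, hdiag, hnc⟩ := hA
  refine ⟨?_, fun p hp => ?_, fun p hp q hq => ?_⟩
  · rw [card_union_of_disjoint (disjoint_fan hdiag), card_fan, hcard]
    omega
  · rcases mem_union.1 hp with hp | hp
    · rw [mem_fan] at hp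
      exact ⟨by omega, by omega, by omega, by omega⟩
    · obtain ⟨h₁, h₂, h₃, h₄⟩ := hdiag p hp
      exact ⟨h₁, by omega, h₃, by omega⟩
  · rcases mem_union.1 hp with hp | hp <;> rcases mem_union.1 hq with hq | hq
    · exact (not_crosses_fan hp (Or.inl (mem_fan.1 hq).1)).1
    · exact (not_crosses_fan hp (Or.inr (hdiag q hq).2.1)).1
    · exact (not_crosses_fan hq (Or.inr (hdiag p hp).2.1)).2
    · exact hnc p hp q hq

theorem FlipAdj.fan_union (h : FlipAdj m A B) (hm : 1 ≤ m) (hmn : m ≤ n) :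
    FlipAdj n (fan m n ∪ A) (fan m n ∪ B) := by
  obtain ⟨hA, hB, hAB, hBA⟩ := h
  refine ⟨hA.fan_union hm hmn, hB.fan_union hm hmn, ?_, ?_⟩
  · rwa [fan_union_sdiff_fan_union hA.2.1]
  · rwa [fan_union_sdiff_fan_union hB.2.1]

theorem IsFlipPath.fan_union {k : ℕ} {f : ℕ → Finset (ℕ × ℕ)} (h : IsFlipPath m k f A B)
    (hm : 1 ≤ m) (hmn : m ≤ n) :
    IsFlipPath n k (fun i => fan m n ∪ f i) (fan m n ∪ A) (fan m n ∪ B) :=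
  ⟨congrArg (fan m n ∪ ·) h.1, congrArg (fan m n ∪ ·) h.2.1,
    fun i hi => (h.2.2 i hi).fan_union hm hmn⟩

theorem conflicts_singleton_fan_union (hp : IsDiagonal m p) :
    conflicts {p} (fan m n ∪ A) = conflicts {p} A :=
  conflicts_union_right_of_not_crosses fun _ hs _ hq =>
    (not_crosses_fan hq (Or.inr ((mem_singleton.1 hs) ▸ hp).2.1)).2

end Fan

section Decagon

def diagonals (n : ℕ) : Finset (ℕ × ℕ) :=
  (range (n + 2) ×ˢ range (n + 2)).filter (IsDiagonal n)

theorem mem_diagonals {n : ℕ} {p : ℕ × ℕ} : p ∈ diagonals n ↔ IsDiagonal n p := by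
  simp only [diagonals, mem_filter, mem_product, mem_range, and_iff_right_iff_imp]
  rintro ⟨h₁, h₂, -, -⟩
  omega

def decagonS : Finset (ℕ × ℕ) := {(1, 3), (1, 4), (1, 5), (1, 7), (1, 8), (1, 9), (5, 7)}

def decagonT : Finset (ℕ × ℕ) := {(0, 2), (0, 3), (0, 4), (0, 5), (0, 6), (6, 8), (6, 9)}

def decagonPath : ℕ → Finset (ℕ × ℕ)
  | 0 => decagonS
  | 1 => {(1, 3), (1, 4), (1, 5), (1, 6), (1, 7), (1, 8), (1, 9)}
  | 2 => {(1, 3), (1, 4), (1, 5), (1, 6), (1, 8), (1, 9), (6, 8)}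
  | 3 => {(1, 3), (1, 4), (1, 5), (1, 6), (1, 9), (6, 8), (6, 9)}
  | 4 => {(0, 6), (1, 3), (1, 4), (1, 5), (1, 6), (6, 8), (6, 9)}
  | 5 => {(0, 5), (0, 6), (1, 3), (1, 4), (1, 5), (6, 8), (6, 9)}
  | 6 => {(0, 4), (0, 5), (0, 6), (1, 3), (1, 4), (6, 8), (6, 9)}
  | 7 => {(0, 3), (0, 4), (0, 5), (0, 6), (1, 3), (6, 8), (6, 9)}
  | _ => decagonT

/-- The flips of `decagonS` that do not increase the conflicts with `decagonT`, together with
`decagonS` itself, closed under flips that insert an edge of `decagonT`. -/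
def decagonTrap : Finset (Finset (ℕ × ℕ)) :=
  {decagonS,
   {(1, 4), (1, 5), (1, 7), (1, 8), (1, 9), (2, 4), (5, 7)},
   {(1, 3), (1, 4), (1, 5), (1, 7), (1, 9), (5, 7), (7, 9)},
   {(1, 3), (1, 5), (1, 7), (1, 8), (1, 9), (3, 5), (5, 7)},
   {(1, 3), (1, 4), (1, 5), (1, 8), (1, 9), (5, 7), (5, 8)},
   {(0, 8), (1, 3), (1, 4), (1, 5), (1, 7), (1, 8), (5, 7)},
   {(1, 3), (1, 4), (1, 5), (1, 8), (1, 9), (5, 8), (6, 8)}}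

theorem isTriangulation_decagonS : IsTriangulation 8 decagonS := by decide

theorem isTriangulation_decagonT : IsTriangulation 8 decagonT := by decide

theorem disjoint_decagonS_decagonT : Disjoint decagonS decagonT := by decide

theorem card_decagonS : #decagonS = 7 := rfl

theorem isFlipPath_decagonPath : IsFlipPath 8 8 decagonPath decagonS decagonT :=
  ⟨rfl, rfl, by decide⟩

theorem decagonT_crosses_two : ∀ t ∈ decagonT,
    ∃ a ∈ decagonS, ∃ b ∈ decagonS, a ≠ b ∧ Crosses a t ∧ Crosses b t := by
  decide

theorem decagonS_mem_decagonTrap : decagonS ∈ decagonTrap := by decide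

theorem decagonT_notMem_decagonTrap : decagonT ∉ decagonTrap := by decide

theorem isTriangulation_of_mem_decagonTrap : ∀ U ∈ decagonTrap, IsTriangulation 8 U := by
  decide

theorem decagonTrap_closed : ∀ U ∈ decagonTrap, ∀ e ∈ U, e ∉ decagonT →
    ∀ e' ∈ decagonT, e' ∉ U → (∀ x ∈ insert e' (U.erase e), ∀ y ∈ insert e' (U.erase e),
      ¬ Crosses x y) → insert e' (U.erase e) ∈ decagonTrap := by
  decide

theorem decagonS_flip_dichotomy : ∀ e ∈ decagonS, ∀ e' ∈ diagonals 8, e' ∉ decagonS →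
    (∀ s ∈ decagonS.erase e, ¬ Crosses e' s) →
      conflicts {e} decagonT < conflicts {e'} decagonT ∨
        insert e' (decagonS.erase e) ∈ decagonTrap := by
  decide

end Decagon

section Construction

variable {n : ℕ}

def triS (n : ℕ) : Finset (ℕ × ℕ) := fan 8 n ∪ decagonS

def triT (n : ℕ) : Finset (ℕ × ℕ) := fan 8 n ∪ decagonT

theorem triS_sdiff_triT : triS n \ triT n = decagonS := by
  rw [triS, triT, fan_union_sdiff_fan_union isTriangulation_decagonS.2.1,
    sdiff_eq_self_of_disjoint disjoint_decagonS_decagonT]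

theorem not_isFlipPath_fan_union_of_mem_decagonTrap {U : Finset (ℕ × ℕ)} (hU : U ∈ decagonTrap)
    (f : ℕ → Finset (ℕ × ℕ)) : ¬ IsFlipPath n #(U \ decagonT) f (fan 8 n ∪ U) (triT n) := by
  rw [← fan_union_sdiff_fan_union (n := n) (isTriangulation_of_mem_decagonTrap U hU).2.1]
  refine not_isFlipPath_card_sdiff_of_closed (B := (fan 8 n ∪ ·) '' decagonTrap) ?_ ?_
    ⟨U, hU, rfl⟩ f
  · rintro ⟨V, hV, hVT⟩
    exact decagonT_notMem_decagonTrap (eq_of_fan_union_eq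
      (isTriangulation_of_mem_decagonTrap V hV).2.1 isTriangulation_decagonT.2.1 hVT ▸ hV)
  · rintro _ ⟨V, hV, rfl⟩ e he heT e' he'T he'V hW
    have hefan : e ∉ fan 8 n := fun h => heT (mem_union_left _ h)
    have hflip : insert e' ((fan 8 n ∪ V).erase e) = fan 8 n ∪ insert e' (V.erase e) := by
      rw [erase_union_distrib, erase_eq_of_notMem hefan, union_insert]
    rw [hflip] at hW ⊢
    refine ⟨_, decagonTrap_closed V hV e ((mem_union.1 he).resolve_left hefan)
      (fun h => heT (mem_union_right _ h)) e'
      ((mem_union.1 he'T).resolve_left fun h => he'V (mem_union_left _ h))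
      (fun h => he'V (mem_union_right _ h)) ?_, rfl⟩
    exact fun x hx y hy => hW.2.2 x (mem_union_right _ hx) y (mem_union_right _ hy)

theorem isFlipPath_triS_triT (hn : 8 ≤ n) :
    IsFlipPath n 8 (fun i => fan 8 n ∪ decagonPath i) (triS n) (triT n) :=
  isFlipPath_decagonPath.fan_union (by norm_num) hn

theorem flipDist_triS_triT (hn : 8 ≤ n) : flipDist n (triS n) (triT n) = 8 := by
  refine le_antisymm (Nat.sInf_le ⟨_, isFlipPath_triS_triT hn⟩)
    (le_csInf ⟨8, _, isFlipPath_triS_triT hn⟩ ?_)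
  rintro k ⟨f, hf⟩
  have hle := hf.card_sdiff_le
  rw [triS_sdiff_triT, card_decagonS] at hle
  have hne : k ≠ 7 := by
    rintro rfl
    refine not_isFlipPath_fan_union_of_mem_decagonTrap (n := n) decagonS_mem_decagonTrap f ?_
    rwa [sdiff_eq_self_of_disjoint disjoint_decagonS_decagonT, card_decagonS]
  omega

theorem exists_flip_decagonS_of_flipAdj_triS {W : Finset (ℕ × ℕ)} (hadj : FlipAdj n (triS n) W)
    (hW : #(W \ triT n) ≤ 7) :
    ∃ e ∈ decagonS, ∃ e' ∈ diagonals 8, e' ∉ decagonS ∧ e' ∉ decagonT ∧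
      (∀ s ∈ decagonS.erase e, ¬ Crosses e' s) ∧ W = fan 8 n ∪ insert e' (decagonS.erase e) := by
  obtain ⟨e, he, e', he', rfl⟩ := hadj.exists_eq_insert_erase
  have hnc := hadj.2.1.2.2
  have he'W : e' ∈ insert e' ((triS n).erase e) := mem_insert_self _ _
  have he'fan : e' ∉ fan 8 n := fun h => he' (mem_union_left _ h)
  have he'S : e' ∉ decagonS := fun h => he' (mem_union_right _ h)
  have he'T : e' ∉ decagonT := fun h => by
    obtain ⟨a, ha, b, hb, hab, hat, hbt⟩ := decagonT_crosses_two e' h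
    exact notMem_of_crosses_two hnc hadj.2.2.1.le (mem_union_right _ ha) (mem_union_right _ hb)
      hab hat hbt he'W
  have heT : e ∉ triT n := by
    intro heT
    have hcount := card_sdiff_insert_erase_add (T := triT n) he he'
    rw [if_pos heT, if_neg (show e' ∉ triT n from fun h => (mem_union.1 h).elim he'fan he'T),
      triS_sdiff_triT,
      card_decagonS] at hcount
    omega
  have heS : e ∈ decagonS := (mem_union.1 he).resolve_left fun h => heT (mem_union_left _ h)
  have hflip : insert e' ((triS n).erase e) = fan 8 n ∪ insert e' (decagonS.erase e) := by
    rw [triS, erase_union_distrib,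
      erase_eq_of_notMem (isTriangulation_decagonS.2.1 e heS).notMem_fan, union_insert]
  have hdiag : IsDiagonal 8 e' := (hadj.2.1.2.1 e' he'W).of_not_crosses_fan he'fan
    fun q hq => hnc q (hflip ▸ mem_union_left _ hq) e' he'W
  refine ⟨e, heS, e', mem_diagonals.2 hdiag, he'S, he'T, fun s hs => hnc e' he'W s ?_, hflip⟩
  rw [hflip]
  exact mem_union_right _ (mem_insert_of_mem hs)

theorem conflicts_triS_lt_of_flipAdj {W : Finset (ℕ × ℕ)} {g : ℕ → Finset (ℕ × ℕ)}
    (hadj : FlipAdj n (triS n) W) (hpath : IsFlipPath n 7 g W (triT n)) :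
    conflicts (triS n) (triT n) < conflicts W (triT n) := by
  obtain ⟨e, he, e', he'D, he'S, he'T, hnc, rfl⟩ :=
    exists_flip_decagonS_of_flipAdj_triS hadj hpath.card_sdiff_le
  have heT : e ∉ decagonT := disjoint_left.1 disjoint_decagonS_decagonT he
  rcases decagonS_flip_dichotomy e he e' he'D he'S hnc with hlt | htrap
  · have hdiag : ∀ p ∈ insert e' (decagonS.erase e), IsDiagonal 8 p := by
      intro p hp
      rcases mem_insert.1 hp with rfl | hp
      exacts [mem_diagonals.1 he'D, isTriangulation_decagonS.2.1 p (mem_of_mem_erase hp)]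
    have hflip := conflicts_insert_erase_add (T := fan 8 n ∪ decagonT) he he'S
    rw [conflicts_singleton_fan_union (isTriangulation_decagonS.2.1 e he),
      conflicts_singleton_fan_union (mem_diagonals.1 he'D)] at hflip
    rw [triS, triT, conflicts_union_of_disjoint (disjoint_fan isTriangulation_decagonS.2.1),
      conflicts_union_of_disjoint (disjoint_fan hdiag)]
    omega
  · have hcard : #(insert e' (decagonS.erase e) \ decagonT) = 7 := by
      have hcount := card_sdiff_insert_erase_add (T := decagonT) he he'S
      rw [if_neg heT, if_neg he'T, sdiff_eq_self_of_disjoint disjoint_decagonS_decagonT,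
        card_decagonS] at hcount
      omega
    exact (not_isFlipPath_fan_union_of_mem_decagonTrap htrap g (hcard ▸ hpath)).elim

end Construction

/-- For every `n ≥ 8` there are triangulations `S`, `T` of size `n` such that
every geodesic from `S` to `T` begins with a flip strictly increasing the
number of conflicts with `T`. -/
theorem stmt0 :
    ∀ n : ℕ, 8 ≤ n → ∃ S T : Finset (ℕ × ℕ),
      IsTriangulation n S ∧ IsTriangulation n T ∧
      ∀ (k : ℕ) (f : ℕ → Finset (ℕ × ℕ)), IsGeodesic n k f S T →
        conflicts S T < conflicts (f 1) T := by
  intro n hn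
  refine ⟨triS n, triT n, isTriangulation_decagonS.fan_union (by norm_num) hn,
    isTriangulation_decagonT.fan_union (by norm_num) hn, ?_⟩
  rintro k f ⟨hf, rfl⟩
  rw [flipDist_triS_triT hn] at hf
  exact conflicts_triS_lt_of_flipAdj hf.flipAdj_zero hf.tail
end

section
/- The number of conflicts does not satisfy the triangle inequality: there exist triangulations A, B, C of size 3 (triangulations of the pentagon, each consisting of 2 non-crossing diagonals) with conflicts(A,C) = 1, conflicts(C,B) = 1, and conflicts(A,B) = 3; in particular conflicts(A,B) > conflicts(A,C) + conflicts(C,B). -/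
/-- The number of conflicts fails the triangle inequality: there are
triangulations `A`, `B`, `C` of the pentagon (size 3) with
`conflicts A C = 1`, `conflicts C B = 1` and `conflicts A B = 3`. -/
theorem stmt5 :
    ∃ A B C : Finset (ℕ × ℕ),
      IsTriangulation 3 A ∧ IsTriangulation 3 B ∧ IsTriangulation 3 C ∧
      conflicts A C = 1 ∧ conflicts C B = 1 ∧ conflicts A B = 3 ∧
      conflicts A C + conflicts C B < conflicts A B := by
  refine ⟨{(0,2),(0,3)}, {(1,3),(1,4)}, {(1,3),(0,3)}, ?_, ?_, ?_, ?_, ?_, ?_, ?_⟩ <;>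
    simp [IsTriangulation, IsDiagonal, Crosses, conflicts] <;> decide
end

section
/- For every integer n ≥ 8 there exist triangulations S and T of size n such that: S and T have no common edges; no edge of S is one-off with respect to T; the flip distance satisfies d(S,T) = n; there is a unique geodesic from S to T in the associahedron graph; and the first step of every geodesic from S to T increases the number of conflicts with T by exactly n − 7, i.e. conflicts(S_1, T) = conflicts(S, T) + (n − 7). -/
def Sn (n : ℕ) : Finset (ℕ × ℕ) :=
  insert (3,5) (((Finset.Icc 1 (n-1)).erase 4).image (fun j => (j, n+1)))

def Tn (n : ℕ) : Finset (ℕ × ℕ) :=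
  insert (1,4) (insert (2,4) ((Finset.Icc 4 n).image (fun j => (0,j))))

def gmid (n i : ℕ) : Finset (ℕ × ℕ) :=
  ((Finset.Icc 4 i).image (fun j => (0,j))) ∪ {(1,4),(2,4)} ∪
    ((Finset.Icc i (n-1)).image (fun j => (j, n+1)))

def gpath (n : ℕ) : ℕ → Finset (ℕ × ℕ)
  | 0 => Sn n
  | 1 => (Finset.Icc 1 (n-1)).image (fun j => (j, n+1))
  | 2 => insert (2,4) (((Finset.Icc 1 (n-1)).erase 3).image (fun j => (j, n+1)))
  | 3 => insert (1,4) (insert (2,4) ((((Finset.Icc 1 (n-1)).erase 3).erase 2).image (fun j => (j, n+1))))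
  | (i+4) => gmid n (i+4)

lemma mem_Sn {n : ℕ} (e : ℕ × ℕ) :
    e ∈ Sn n ↔ (e.1 = 3 ∧ e.2 = 5) ∨ (1 ≤ e.1 ∧ e.1 ≤ n-1 ∧ e.1 ≠ 4 ∧ e.2 = n+1) := by
  obtain ⟨a, b⟩ := e
  simp only [Sn, Finset.mem_insert, Finset.mem_image, Finset.mem_erase, Finset.mem_Icc,
    Prod.ext_iff]
  constructor
  · rintro (⟨h1, h2⟩ | ⟨j, ⟨hj1, hj2, hj3⟩, rfl, rfl⟩) <;> simp_all <;> omega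
  · rintro (⟨h1, h2⟩ | ⟨h1, h2, h3, h4⟩)
    · left; exact ⟨h1, h2⟩
    · right; exact ⟨a, ⟨h3, h1, h2⟩, rfl, h4.symm⟩

lemma mem_Tn {n : ℕ} (e : ℕ × ℕ) :
    e ∈ Tn n ↔ (e.1 = 0 ∧ 4 ≤ e.2 ∧ e.2 ≤ n) ∨ (e.1 = 1 ∧ e.2 = 4) ∨ (e.1 = 2 ∧ e.2 = 4) := by
  obtain ⟨a, b⟩ := e
  simp only [Tn, Finset.mem_insert, Finset.mem_image, Finset.mem_Icc, Prod.ext_iff]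
  constructor
  · rintro (⟨h1, h2⟩ | ⟨h1, h2⟩ | ⟨j, ⟨hj1, hj2⟩, rfl, rfl⟩) <;> simp_all
  · rintro (⟨h1, h2, h3⟩ | ⟨h1, h2⟩ | ⟨h1, h2⟩)
    · right; right; exact ⟨b, ⟨h2, h3⟩, h1.symm, rfl⟩
    · left; exact ⟨h1, h2⟩
    · right; left; exact ⟨h1, h2⟩

lemma mem_g1 {n : ℕ} (e : ℕ × ℕ) :
    e ∈ gpath n 1 ↔ (1 ≤ e.1 ∧ e.1 ≤ n-1 ∧ e.2 = n+1) := by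
  obtain ⟨a, b⟩ := e
  simp only [gpath, Finset.mem_image, Finset.mem_Icc, Prod.ext_iff]
  constructor
  · rintro ⟨j, ⟨hj1, hj2⟩, rfl, rfl⟩; exact ⟨hj1, hj2, rfl⟩
  · rintro ⟨h1, h2, h3⟩; exact ⟨a, ⟨h1, h2⟩, rfl, h3.symm⟩

lemma mem_g2 {n : ℕ} (e : ℕ × ℕ) :
    e ∈ gpath n 2 ↔ (e.1 = 2 ∧ e.2 = 4) ∨ (1 ≤ e.1 ∧ e.1 ≤ n-1 ∧ e.1 ≠ 3 ∧ e.2 = n+1) := by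
  obtain ⟨a, b⟩ := e
  simp only [gpath, Finset.mem_insert, Finset.mem_image, Finset.mem_erase, Finset.mem_Icc,
    Prod.ext_iff]
  constructor
  · rintro (⟨h1, h2⟩ | ⟨j, ⟨hj1, hj2, hj3⟩, rfl, rfl⟩) <;> simp_all
  · rintro (⟨h1, h2⟩ | ⟨h1, h2, h3, h4⟩)
    · left; exact ⟨h1, h2⟩
    · right; exact ⟨a, ⟨h3, h1, h2⟩, rfl, h4.symm⟩

lemma mem_g3 {n : ℕ} (e : ℕ × ℕ) :
    e ∈ gpath n 3 ↔ (e.1 = 1 ∧ e.2 = 4) ∨ (e.1 = 2 ∧ e.2 = 4) ∨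
      (1 ≤ e.1 ∧ e.1 ≤ n-1 ∧ e.1 ≠ 2 ∧ e.1 ≠ 3 ∧ e.2 = n+1) := by
  obtain ⟨a, b⟩ := e
  simp only [gpath, Finset.mem_insert, Finset.mem_image, Finset.mem_erase, Finset.mem_Icc,
    Prod.ext_iff]
  constructor
  · rintro (⟨h1, h2⟩ | ⟨h1, h2⟩ | ⟨j, ⟨hj0, hj1, hj2, hj3⟩, rfl, rfl⟩) <;> simp_all
  · rintro (⟨h1, h2⟩ | ⟨h1, h2⟩ | ⟨h1, h2, h3, h4, h5⟩)
    · left; exact ⟨h1, h2⟩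
    · right; left; exact ⟨h1, h2⟩
    · right; right; exact ⟨a, ⟨h3, h4, h1, h2⟩, rfl, h5.symm⟩

lemma mem_gmid {n i : ℕ} (e : ℕ × ℕ) :
    e ∈ gmid n i ↔ (e.1 = 0 ∧ 4 ≤ e.2 ∧ e.2 ≤ i) ∨ (e.1 = 1 ∧ e.2 = 4) ∨ (e.1 = 2 ∧ e.2 = 4) ∨
      (i ≤ e.1 ∧ e.1 ≤ n-1 ∧ e.2 = n+1) := by
  obtain ⟨a, b⟩ := e
  simp only [gmid, Finset.mem_union, Finset.mem_insert, Finset.mem_singleton, Finset.mem_image,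
    Finset.mem_Icc, Prod.ext_iff]
  constructor
  · rintro ((⟨j, ⟨hj1, hj2⟩, rfl, rfl⟩ | ⟨h1, h2⟩ | ⟨h1, h2⟩) | ⟨j, ⟨hj1, hj2⟩, rfl, rfl⟩) <;>
      simp_all
  · rintro (⟨h1, h2, h3⟩ | ⟨h1, h2⟩ | ⟨h1, h2⟩ | ⟨h1, h2, h3⟩)
    · left; left; exact ⟨b, ⟨h2, h3⟩, h1.symm, rfl⟩
    · left; right; left; exact ⟨h1, h2⟩
    · left; right; right; exact ⟨h1, h2⟩
    · right; exact ⟨a, ⟨h1, h2⟩, rfl, h3.symm⟩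

lemma mem_g4 {n i : ℕ} (hi : 4 ≤ i) (e : ℕ × ℕ) :
    e ∈ gpath n i ↔ (e.1 = 0 ∧ 4 ≤ e.2 ∧ e.2 ≤ i) ∨ (e.1 = 1 ∧ e.2 = 4) ∨ (e.1 = 2 ∧ e.2 = 4) ∨
      (i ≤ e.1 ∧ e.1 ≤ n-1 ∧ e.2 = n+1) := by
  obtain ⟨j, rfl⟩ : ∃ j, i = j + 4 := ⟨i - 4, by omega⟩
  exact mem_gmid e

lemma mkinj (c : ℕ) : Function.Injective (fun j => (j, c) : ℕ → ℕ × ℕ) := by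
  intro a b h; simpa using h

lemma mkinj' (c : ℕ) : Function.Injective (fun j => (c, j) : ℕ → ℕ × ℕ) := by
  intro a b h; simpa using h

lemma card_Sn {n : ℕ} (hn : 8 ≤ n) : (Sn n).card = n - 1 := by
  rw [Sn, Finset.card_insert_of_notMem, Finset.card_image_of_injective _ (mkinj _),
    Finset.card_erase_of_mem, Nat.card_Icc] <;>
    simp [Finset.mem_image, Finset.mem_Icc, Prod.ext_iff] <;> omega

lemma card_Tn {n : ℕ} (hn : 8 ≤ n) : (Tn n).card = n - 1 := by
  rw [Tn, Finset.card_insert_of_notMem, Finset.card_insert_of_notMem,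
    Finset.card_image_of_injective _ (mkinj' _), Nat.card_Icc] <;>
    simp [Finset.mem_image, Finset.mem_Icc, Prod.ext_iff] <;> omega

lemma tri_Sn {n : ℕ} (hn : 8 ≤ n) : IsTriangulation n (Sn n) := by
  refine ⟨card_Sn hn, fun e he => ?_, fun e he f hf => ?_⟩
  · rw [mem_Sn] at he; unfold IsDiagonal; omega
  · rw [mem_Sn] at he hf; unfold Crosses; omega

lemma tri_Tn {n : ℕ} (hn : 8 ≤ n) : IsTriangulation n (Tn n) := by
  refine ⟨card_Tn hn, fun e he => ?_, fun e he f hf => ?_⟩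
  · rw [mem_Tn] at he; unfold IsDiagonal; omega
  · rw [mem_Tn] at he hf; unfold Crosses; omega

lemma card_g1 {n : ℕ} (hn : 8 ≤ n) : (gpath n 1).card = n - 1 := by
  rw [gpath, Finset.card_image_of_injective _ (mkinj _), Nat.card_Icc]; omega

lemma card_g2 {n : ℕ} (hn : 8 ≤ n) : (gpath n 2).card = n - 1 := by
  rw [gpath, Finset.card_insert_of_notMem, Finset.card_image_of_injective _ (mkinj _),
    Finset.card_erase_of_mem, Nat.card_Icc] <;>
    simp [Finset.mem_image, Finset.mem_Icc, Prod.ext_iff] <;> omega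

lemma card_g3 {n : ℕ} (hn : 8 ≤ n) : (gpath n 3).card = n - 1 := by
  rw [gpath, Finset.card_insert_of_notMem, Finset.card_insert_of_notMem,
    Finset.card_image_of_injective _ (mkinj _), Finset.card_erase_of_mem,
    Finset.card_erase_of_mem, Nat.card_Icc] <;>
    simp [Finset.mem_image, Finset.mem_Icc, Finset.mem_erase, Prod.ext_iff] <;> omega

lemma card_g4 {n i : ℕ} (hn : 8 ≤ n) (hi : 4 ≤ i) (hin : i ≤ n) : (gpath n i).card = n - 1 := by
  obtain ⟨j, rfl⟩ : ∃ j, i = j + 4 := ⟨i - 4, by omega⟩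
  show (gmid n (j+4)).card = n - 1
  have d1 : Disjoint ((Finset.Icc 4 (j+4)).image (fun j => ((0:ℕ),j)))
      ({(1,4),(2,4)} : Finset (ℕ × ℕ)) := by
    simp only [Finset.disjoint_left]
    rintro ⟨a,b⟩ h1 h2
    simp only [Finset.mem_image, Finset.mem_insert, Finset.mem_singleton, Finset.mem_Icc,
      Prod.ext_iff] at h1 h2
    obtain ⟨k, hk, hke⟩ := h1; omega
  have d2 : Disjoint (((Finset.Icc 4 (j+4)).image (fun j => ((0:ℕ),j))) ∪ {(1,4),(2,4)})
      ((Finset.Icc (j+4) (n-1)).image (fun j => (j, n+1))) := by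
    simp only [Finset.disjoint_left]
    rintro ⟨a,b⟩ h1 h2
    simp only [Finset.mem_union, Finset.mem_image, Finset.mem_insert, Finset.mem_singleton,
      Finset.mem_Icc, Prod.ext_iff] at h1 h2
    obtain ⟨k, hk, hke⟩ := h2
    rcases h1 with (⟨k', hk', hke'⟩ | h | h) <;> omega
  rw [gmid, Finset.card_union_of_disjoint d2, Finset.card_union_of_disjoint d1,
    Finset.card_image_of_injective _ (mkinj' _), Finset.card_image_of_injective _ (mkinj _),
    Nat.card_Icc, Nat.card_Icc]
  have : (({(1,4),(2,4)} : Finset (ℕ × ℕ))).card = 2 := by decide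
  omega

lemma card_gpath {n i : ℕ} (hn : 8 ≤ n) (hin : i ≤ n) : (gpath n i).card = n - 1 := by
  match i with
  | 0 => exact card_Sn hn
  | 1 => exact card_g1 hn
  | 2 => exact card_g2 hn
  | 3 => exact card_g3 hn
  | (j+4) => exact card_g4 hn (by omega) hin

lemma tri_gpath {n i : ℕ} (hn : 8 ≤ n) (hin : i ≤ n) : IsTriangulation n (gpath n i) := by
  refine ⟨card_gpath hn hin, fun e he => ?_, fun e he f hf => ?_⟩
  · match i with
    | 0 => replace he := (mem_Sn e).mp he; unfold IsDiagonal; omega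
    | 1 => rw [mem_g1] at he; unfold IsDiagonal; omega
    | 2 => rw [mem_g2] at he; unfold IsDiagonal; omega
    | 3 => rw [mem_g3] at he; unfold IsDiagonal; omega
    | (j+4) => rw [mem_g4 (by omega)] at he; unfold IsDiagonal; omega
  · match i with
    | 0 => replace he := (mem_Sn e).mp he; replace hf := (mem_Sn f).mp hf; unfold Crosses; omega
    | 1 => rw [mem_g1] at he hf; unfold Crosses; omega
    | 2 => rw [mem_g2] at he hf; unfold Crosses; omega
    | 3 => rw [mem_g3] at he hf; unfold Crosses; omega
    | (j+4) => rw [mem_g4 (by omega)] at he hf; unfold Crosses; omega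

lemma sdiff_flip1 {X : Finset (ℕ × ℕ)} {x y : ℕ × ℕ} (hx : x ∈ X) (hy : y ∉ X) :
    X \ insert y (X.erase x) = {x} := by
  ext e
  simp only [Finset.mem_sdiff, Finset.mem_insert, Finset.mem_erase, Finset.mem_singleton]
  constructor
  · rintro ⟨he, hne⟩; by_contra hne'; exact hne (Or.inr ⟨hne', he⟩)
  · rintro rfl
    refine ⟨hx, ?_⟩
    rintro (rfl | ⟨hne, _⟩)
    · exact hy hx
    · exact hne rfl

lemma sdiff_flip2 {X : Finset (ℕ × ℕ)} {x y : ℕ × ℕ} (hx : x ∈ X) (hy : y ∉ X) :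
    insert y (X.erase x) \ X = {y} := by
  ext e
  simp only [Finset.mem_sdiff, Finset.mem_insert, Finset.mem_erase, Finset.mem_singleton]
  constructor
  · rintro ⟨(rfl | ⟨_, he⟩), hne⟩
    · rfl
    · exact absurd he hne
  · rintro rfl; exact ⟨Or.inl rfl, hy⟩

def xe (n i : ℕ) : ℕ × ℕ :=
  if i = 0 then (3,5) else if i = 1 then (3,n+1) else if i = 2 then (2,n+1)
  else if i = 3 then (1,n+1) else (i,n+1)

def ye (n i : ℕ) : ℕ × ℕ :=
  if i = 0 then (4,n+1) else if i = 1 then (2,4) else if i = 2 then (1,4)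
  else if i = 3 then (0,4) else (0,i+1)

lemma xe0 {n : ℕ} : xe n 0 = (3,5) := rfl
lemma xe1 {n : ℕ} : xe n 1 = (3,n+1) := rfl
lemma xe2 {n : ℕ} : xe n 2 = (2,n+1) := rfl
lemma xe3 {n : ℕ} : xe n 3 = (1,n+1) := rfl
lemma xe4 {n i : ℕ} (h : 4 ≤ i) : xe n i = (i,n+1) := by
  unfold xe; rw [if_neg (by omega), if_neg (by omega), if_neg (by omega), if_neg (by omega)]
lemma ye0 {n : ℕ} : ye n 0 = (4,n+1) := rfl
lemma ye1 {n : ℕ} : ye n 1 = (2,4) := rfl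
lemma ye2 {n : ℕ} : ye n 2 = (1,4) := rfl
lemma ye3 {n : ℕ} : ye n 3 = (0,4) := rfl
lemma ye4 {n i : ℕ} (h : 4 ≤ i) : ye n i = (0,i+1) := by
  unfold ye; rw [if_neg (by omega), if_neg (by omega), if_neg (by omega), if_neg (by omega)]

lemma step_repr {n i : ℕ} (hn : 8 ≤ n) (hi : i < n) :
    xe n i ∈ gpath n i ∧ ye n i ∉ gpath n i ∧
      gpath n (i+1) = insert (ye n i) ((gpath n i).erase (xe n i)) := by
  match i with
  | 0 =>
    rw [xe0, ye0]
    refine ⟨(mem_Sn _).mpr ?_, fun h => ?_, ?_⟩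
    · omega
    · replace h := (mem_Sn _).mp h; dsimp only at h; omega
    · ext e
      rw [show gpath n 0 = Sn n from rfl]
      rw [Finset.mem_insert, Finset.mem_erase, mem_g1, mem_Sn]
      simp only [Prod.ext_iff, ne_eq]
      omega
  | 1 =>
    rw [xe1, ye1]
    refine ⟨(mem_g1 _).mpr ?_, fun h => ?_, ?_⟩
    · omega
    · rw [mem_g1] at h; dsimp only at h; omega
    · ext e
      rw [Finset.mem_insert, Finset.mem_erase, mem_g1, mem_g2]
      simp only [Prod.ext_iff, ne_eq]
      omega
  | 2 =>
    rw [xe2, ye2]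
    refine ⟨(mem_g2 _).mpr ?_, fun h => ?_, ?_⟩
    · omega
    · rw [mem_g2] at h; dsimp only at h; omega
    · ext e
      rw [Finset.mem_insert, Finset.mem_erase, mem_g2, mem_g3]
      simp only [Prod.ext_iff, ne_eq]
      omega
  | 3 =>
    rw [xe3, ye3]
    refine ⟨(mem_g3 _).mpr ?_, fun h => ?_, ?_⟩
    · omega
    · rw [mem_g3] at h; dsimp only at h; omega
    · ext e
      rw [Finset.mem_insert, Finset.mem_erase, mem_g3, mem_g4 (show (4:ℕ) ≤ 3+1 by omega)]
      simp only [Prod.ext_iff, ne_eq]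
      omega
  | (j+4) =>
    have h4 : (4:ℕ) ≤ j + 4 := by omega
    rw [xe4 h4, ye4 h4]
    refine ⟨(mem_g4 h4 _).mpr ?_, fun h => ?_, ?_⟩
    · omega
    · rw [mem_g4 h4] at h; dsimp only at h; omega
    · ext e
      rw [Finset.mem_insert, Finset.mem_erase, mem_g4 h4, mem_g4 (show 4 ≤ j+4+1 by omega)]
      simp only [Prod.ext_iff, ne_eq]
      omega

lemma flipadj_step {n i : ℕ} (hn : 8 ≤ n) (hi : i < n) :
    FlipAdj n (gpath n i) (gpath n (i+1)) := by
  obtain ⟨hx, hy, hrepr⟩ := step_repr hn hi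
  refine ⟨tri_gpath hn (by omega), tri_gpath hn (by omega), ?_, ?_⟩
  · rw [hrepr, sdiff_flip1 hx hy, Finset.card_singleton]
  · rw [hrepr, sdiff_flip2 hx hy, Finset.card_singleton]

lemma gpath_last {n : ℕ} (hn : 8 ≤ n) : gpath n n = Tn n := by
  ext ⟨a, b⟩
  rw [mem_g4 (by omega), mem_Tn]
  omega

lemma flip_repr_of_adj {n : ℕ} {A B : Finset (ℕ × ℕ)} (h : FlipAdj n A B) :
    ∃ x y, x ∈ A ∧ y ∉ A ∧ y ∈ B ∧ B = insert y (A.erase x) := by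
  obtain ⟨_, _, h1, h2⟩ := h
  obtain ⟨x, hx⟩ := Finset.card_eq_one.mp h1
  obtain ⟨y, hy⟩ := Finset.card_eq_one.mp h2
  have hxA : x ∈ A ∧ x ∉ B := by
    have := hx ▸ Finset.mem_singleton_self x; simpa [Finset.mem_sdiff] using this
  have hyB : y ∈ B ∧ y ∉ A := by
    have := hy ▸ Finset.mem_singleton_self y; simpa [Finset.mem_sdiff] using this
  refine ⟨x, y, hxA.1, hyB.2, hyB.1, ?_⟩
  ext z
  simp only [Finset.mem_insert, Finset.mem_erase]
  constructor
  · intro hz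
    by_cases hzA : z ∈ A
    · right
      refine ⟨?_, hzA⟩
      rintro rfl; exact hxA.2 hz
    · left
      have : z ∈ B \ A := Finset.mem_sdiff.mpr ⟨hz, hzA⟩
      rw [hy] at this; exact Finset.mem_singleton.mp this
  · rintro (rfl | ⟨hzx, hzA⟩)
    · exact hyB.1
    · by_contra hzB
      have : z ∈ A \ B := Finset.mem_sdiff.mpr ⟨hzA, hzB⟩
      rw [hx] at this
      exact hzx (Finset.mem_singleton.mp this)

lemma count_step {n : ℕ} {A B T : Finset (ℕ × ℕ)} (h : FlipAdj n A B) :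
    (T \ A).card ≤ (T \ B).card + 1 := by
  have hsub : T \ A ⊆ (T \ B) ∪ (B \ A) := by
    intro z hz
    rw [Finset.mem_sdiff] at hz
    by_cases hzB : z ∈ B
    · exact Finset.mem_union_right _ (Finset.mem_sdiff.mpr ⟨hzB, hz.2⟩)
    · exact Finset.mem_union_left _ (Finset.mem_sdiff.mpr ⟨hz.1, hzB⟩)
  calc (T \ A).card ≤ ((T \ B) ∪ (B \ A)).card := Finset.card_le_card hsub
    _ ≤ (T \ B).card + (B \ A).card := Finset.card_union_le _ _
    _ = (T \ B).card + 1 := by rw [h.2.2.2]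

lemma count_path {n k : ℕ} {f : ℕ → Finset (ℕ × ℕ)} {S T' : Finset (ℕ × ℕ)}
    (hf : IsFlipPath n k f S T') (T : Finset (ℕ × ℕ)) :
    ∀ i j, i ≤ j → j ≤ k → (T \ f i).card ≤ (T \ f j).card + (j - i) := by
  intro i j hij hjk
  induction j with
  | zero => simp_all
  | succ j ih =>
    rcases Nat.lt_or_ge i (j+1) with hlt | hge
    · have h1 := ih (by omega) (by omega)
      have h2 : (T \ f j).card ≤ (T \ f (j+1)).card + 1 := count_step (hf.2.2 j (by omega))
      omega
    · have : i = j + 1 := by omega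
      subst this; simp

lemma Sn_inter_Tn {n : ℕ} (hn : 8 ≤ n) : Sn n ∩ Tn n = ∅ := by
  ext e
  simp only [Finset.mem_inter, Finset.notMem_empty, iff_false, not_and]
  intro h1 h2
  rw [mem_Sn] at h1; rw [mem_Tn] at h2
  omega

lemma Tn_sdiff_Sn {n : ℕ} (hn : 8 ≤ n) : (Tn n \ Sn n).card = n - 1 := by
  have : Tn n \ Sn n = Tn n := by
    ext e
    simp only [Finset.mem_sdiff, and_iff_left_iff_imp]
    intro he hs
    rw [mem_Tn] at he; rw [mem_Sn] at hs; omega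
  rw [this, card_Tn hn]

lemma block_two {n : ℕ} {X : Finset (ℕ × ℕ)} {e t w1 w2 : ℕ × ℕ}
    (hw1 : w1 ∈ X) (hw2 : w2 ∈ X) (hne : w1 ≠ w2)
    (hc1 : Crosses t w1) (hc2 : Crosses t w2) :
    ¬ IsTriangulation n (insert t (X.erase e)) := by
  intro htri
  have key : ∀ w, w ∈ X → w ≠ e → ¬ Crosses t w := fun w hw hwe =>
    htri.2.2 t (Finset.mem_insert_self _ _) w
      (Finset.mem_insert_of_mem (Finset.mem_erase.mpr ⟨hwe, hw⟩))
  rcases eq_or_ne e w1 with rfl | h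
  · exact key w2 hw2 (fun h' => hne h'.symm) hc2
  · exact key w1 hw1 (fun h' => h h'.symm) hc1

lemma noOneOff {n : ℕ} (hn : 8 ≤ n) : ∀ e ∈ Sn n, ¬ OneOff n (Sn n) (Tn n) e := by
  rintro e he ⟨-, -, t, htT, htS, htri⟩
  rw [mem_Tn] at htT
  have m1 : ((1:ℕ), n+1) ∈ Sn n := (mem_Sn _).mpr (by norm_num; omega)
  have m2 : ((2:ℕ), n+1) ∈ Sn n := (mem_Sn _).mpr (by norm_num; omega)
  have m3 : ((3:ℕ), n+1) ∈ Sn n := (mem_Sn _).mpr (by norm_num; omega)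
  have m35 : ((3:ℕ), (5:ℕ)) ∈ Sn n := (mem_Sn _).mpr (by norm_num)
  rcases htT with h | h | h
  · exact block_two m1 m2 (by simp) (by unfold Crosses; norm_num; omega)
      (by unfold Crosses; norm_num; omega) htri
  · exact block_two m2 m3 (by simp) (by unfold Crosses; norm_num; omega)
      (by unfold Crosses; norm_num; omega) htri
  · exact block_two m3 m35 (by simp; omega) (by unfold Crosses; norm_num; omega)
      (by unfold Crosses; norm_num; omega) htri

lemma Tn_sdiff_eq {n : ℕ} (hn : 8 ≤ n) : Tn n \ Sn n = Tn n := by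
  ext e
  simp only [Finset.mem_sdiff, and_iff_left_iff_imp]
  intro he hs
  rw [mem_Tn] at he; rw [mem_Sn] at hs; omega

lemma dist_lb {n : ℕ} (hn : 8 ≤ n) {k : ℕ} {f : ℕ → Finset (ℕ × ℕ)}
    (hf : IsFlipPath n k f (Sn n) (Tn n)) : n ≤ k := by
  by_contra hk
  push_neg at hk
  have h0 : (Tn n \ f 0).card = n - 1 := by
    rw [hf.1, Tn_sdiff_eq hn, card_Tn hn]
  have hkk : (Tn n \ f k).card = 0 := by
    rw [hf.2.1, Finset.sdiff_self, Finset.card_empty]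
  have hlb := count_path hf (Tn n) 0 k (by omega) le_rfl
  have hkeq : k = n - 1 := by omega
  have hk1 : 1 ≤ k := by omega
  -- first step
  obtain ⟨x, y, hx, hy, hyB, hrepr⟩ := flip_repr_of_adj (hf.2.2 0 (by omega))
  have h1 : (Tn n \ f 1).card ≤ n - 2 := by
    have := count_path hf (Tn n) 1 k hk1 le_rfl
    omega
  have hyT : y ∈ Tn n := by
    by_contra hyT
    -- then Tn ∩ f 1 = ∅, so Tn \ f 1 = Tn
    have : Tn n \ f 1 = Tn n := by
      ext e
      simp only [Finset.mem_sdiff, and_iff_left_iff_imp]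
      intro he hef
      rw [hrepr] at hef
      rcases Finset.mem_insert.mp hef with rfl | hef
      · exact hyT he
      · have heS : e ∈ Sn n := hf.1 ▸ Finset.mem_of_mem_erase hef
        have := Sn_inter_Tn hn
        have : e ∈ Sn n ∩ Tn n := Finset.mem_inter.mpr ⟨heS, he⟩
        simp_all
    rw [this, card_Tn hn] at h1
    omega
  -- y gives a one-off edge x
  have hxS : x ∈ Sn n := hf.1 ▸ hx
  have hyS : y ∉ Sn n := fun h => hy (hf.1 ▸ h)
  have hxT : x ∉ Tn n := by
    intro hxT
    have : x ∈ Sn n ∩ Tn n := Finset.mem_inter.mpr ⟨hxS, hxT⟩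
    rw [Sn_inter_Tn hn] at this
    simp at this
  exact noOneOff hn x hxS ⟨hxS, hxT, y, hyT, hyS,
    by rw [← hf.1]; rw [← hrepr]; exact (hf.2.2 0 (by omega)).2.1⟩

lemma path_gn {n : ℕ} (hn : 8 ≤ n) : IsFlipPath n n (gpath n) (Sn n) (Tn n) :=
  ⟨rfl, gpath_last hn, fun _ hi => flipadj_step hn hi⟩

lemma flipDist_eq {n : ℕ} (hn : 8 ≤ n) : flipDist n (Sn n) (Tn n) = n := by
  apply le_antisymm
  · exact Nat.sInf_le ⟨gpath n, path_gn hn⟩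
  · exact le_csInf ⟨n, gpath n, path_gn hn⟩ (fun k ⟨f, hf⟩ => dist_lb hn hf)

lemma compat_of_tri {n : ℕ} {X : Finset (ℕ × ℕ)} {y x : ℕ × ℕ}
    (h : IsTriangulation n (insert y (X.erase x))) :
    ∀ w ∈ X, w ≠ x → ¬ Crosses y w := fun w hw hwx =>
  h.2.2 y (Finset.mem_insert_self _ _) w
    (Finset.mem_insert_of_mem (Finset.mem_erase.mpr ⟨hwx, hw⟩))

lemma ne_pair {a b c d : ℕ} (h : a ≠ c ∨ b ≠ d) : ((a,b) : ℕ × ℕ) ≠ (c,d) := by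
  simp only [ne_eq, Prod.mk.injEq, not_and]
  intro h1; omega

lemma eq_pair {a b : ℕ} {y : ℕ × ℕ} (h1 : y.1 = a) (h2 : y.2 = b) : y = (a, b) := by
  have : y = (y.1, y.2) := rfl
  rw [this, h1, h2]

-- flip uniqueness at (3,5)
lemma L1 {n : ℕ} (hn : 8 ≤ n) {y : ℕ × ℕ} (hd : IsDiagonal n y) (hyS : y ∉ Sn n)
    (hc : ∀ w ∈ Sn n, w ≠ (3,5) → ¬ Crosses y w) : y = (4, n+1) := by
  obtain ⟨hd1, hd2, hd3, hd4⟩ := hd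
  have H : ∀ k, 1 ≤ k → k ≤ n-1 → k ≠ 4 → ¬ Crosses y (k, n+1) := by
    intro k h1 h2 h3
    refine hc (k, n+1) ((mem_Sn _).mpr (by right; exact ⟨h1, h2, h3, rfl⟩)) ?_
    simp only [ne_eq, Prod.mk.injEq, not_and]
    intro _; omega
  rw [mem_Sn] at hyS
  rcases Nat.lt_or_ge y.2 (n+1) with hb | hb
  · exfalso
    have h31 : y.1 = 3 := by
      by_contra h
      exact H (y.1+1) (by omega) (by omega) (by omega)
        (Or.inl ⟨by omega, by omega, by omega⟩)
    have h5 : ¬ (5 < y.2) := fun h5 =>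
      H 5 (by omega) (by omega) (by omega) (Or.inl ⟨by omega, by omega, by omega⟩)
    omega
  · exact eq_pair (by omega) (by omega)

-- flip uniqueness at (3,n+1)
lemma L2 {n : ℕ} (hn : 8 ≤ n) {y : ℕ × ℕ} (hd : IsDiagonal n y) (hyS : y ∉ Sn n)
    (hc : ∀ w ∈ Sn n, w ≠ (3,n+1) → ¬ Crosses y w) : y = (2, 5) := by
  obtain ⟨hd1, hd2, hd3, hd4⟩ := hd
  have H : ∀ k, 1 ≤ k → k ≤ n-1 → k ≠ 4 → k ≠ 3 → ¬ Crosses y (k, n+1) := by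
    intro k h1 h2 h3 h4
    refine hc (k, n+1) ((mem_Sn _).mpr (by right; exact ⟨h1, h2, h3, rfl⟩)) ?_
    simp only [ne_eq, Prod.mk.injEq, not_and]
    intro _; omega
  have H35 : ¬ Crosses y (3, 5) := by
    refine hc (3,5) ((mem_Sn _).mpr (by left; exact ⟨rfl, rfl⟩)) ?_
    simp only [ne_eq, Prod.mk.injEq, not_and]
    intro _; omega
  rw [mem_Sn] at hyS
  unfold Crosses at H35
  rcases Nat.lt_or_ge y.2 (n+1) with hb | hb
  · have h31 : y.1 = 2 ∨ y.1 = 3 := by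
      by_contra h
      exact H (y.1+1) (by omega) (by omega) (by omega) (by omega)
        (Or.inl ⟨by omega, by omega, by omega⟩)
    have h5 : ¬ (5 < y.2) := fun h5 =>
      H 5 (by omega) (by omega) (by omega) (by omega)
        (Or.inl ⟨by omega, by omega, by omega⟩)
    dsimp only at H35
    exact eq_pair (by omega) (by omega)
  · exfalso
    have h4 : y.1 = 4 := by omega
    dsimp only at H35
    omega

-- forcing at stages 1 ≤ i ≤ n-1
lemma forc_step {n i : ℕ} {x y : ℕ × ℕ} (hn : 8 ≤ n) (h1 : 1 ≤ i) (h2 : i < n)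
    (hyT : y ∈ Tn n) (hyf : y ∉ gpath n i) (hx : x ∈ gpath n i)
    (htri : IsTriangulation n (insert y ((gpath n i).erase x))) :
    y = ye n i ∧ x = xe n i := by
  have compat := compat_of_tri htri
  rw [mem_Tn] at hyT
  match i with
  | 1 =>
    rw [ye1, xe1]
    rcases hyT with h | h | h
    · exact absurd htri (block_two (w1 := (1, n+1)) (w2 := (2, n+1))
        ((mem_g1 _).mpr (by norm_num; omega)) ((mem_g1 _).mpr (by norm_num; omega))
        (ne_pair (by omega)) (Or.inl (by norm_num; omega)) (Or.inl (by norm_num; omega)))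
    · exact absurd htri (block_two (w1 := (2, n+1)) (w2 := (3, n+1))
        ((mem_g1 _).mpr (by norm_num; omega)) ((mem_g1 _).mpr (by norm_num; omega))
        (ne_pair (by omega)) (Or.inl (by norm_num; omega)) (Or.inl (by norm_num; omega)))
    · refine ⟨eq_pair h.1 h.2, ?_⟩
      by_contra hne
      exact compat (3, n+1) ((mem_g1 _).mpr (by norm_num; omega))
        (fun h' => hne h'.symm) (Or.inl (by norm_num; omega))
  | 2 =>
    rw [ye2, xe2]
    rcases hyT with h | h | h
    · exact absurd htri (block_two (w1 := (1, n+1)) (w2 := (2, n+1))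
        ((mem_g2 _).mpr (by norm_num; omega)) ((mem_g2 _).mpr (by norm_num; omega))
        (ne_pair (by omega)) (Or.inl (by norm_num; omega)) (Or.inl (by norm_num; omega)))
    · refine ⟨eq_pair h.1 h.2, ?_⟩
      by_contra hne
      exact compat (2, n+1) ((mem_g2 _).mpr (by norm_num; omega))
        (fun h' => hne h'.symm) (Or.inl (by norm_num; omega))
    · exact absurd ((mem_g2 _).mpr (by left; exact ⟨rfl, rfl⟩)) (eq_pair h.1 h.2 ▸ hyf)
  | 3 =>
    rw [ye3, xe3]
    have hyg := fun hh => hyf ((mem_g3 _).mpr hh)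
    rcases hyT with h | h | h
    · rcases Nat.lt_or_ge y.2 5 with h5 | h5
      · refine ⟨eq_pair h.1 (by omega), ?_⟩
        by_contra hne
        exact compat (1, n+1) ((mem_g3 _).mpr (by norm_num; omega))
          (fun h' => hne h'.symm) (Or.inl (by norm_num; omega))
      · exact absurd htri (block_two (w1 := (1, n+1)) (w2 := (4, n+1))
          ((mem_g3 _).mpr (by norm_num; omega)) ((mem_g3 _).mpr (by norm_num; omega))
          (ne_pair (by omega)) (Or.inl (by norm_num; omega)) (Or.inl (by norm_num; omega)))
    · exact absurd (by left; exact h) hyg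
    · exact absurd (by right; left; exact h) hyg
  | (j+4) =>
    have h4 : (4:ℕ) ≤ j+4 := by omega
    rw [ye4 h4, xe4 h4]
    have hyg := fun hh => hyf ((mem_g4 h4 _).mpr hh)
    rcases hyT with h | h | h
    · have hy2 : j+4+1 ≤ y.2 := by
        by_contra hh
        exact hyg (by left; exact ⟨h.1, h.2.1, by omega⟩)
      rcases Nat.lt_or_ge y.2 (j+4+2) with h5 | h5
      · refine ⟨eq_pair h.1 (by omega), ?_⟩
        by_contra hne
        exact compat (j+4, n+1) ((mem_g4 h4 _).mpr (by norm_num; omega))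
          (fun h' => hne h'.symm) (Or.inl (by norm_num; omega))
      · exact absurd htri (block_two (w1 := (j+4, n+1)) (w2 := (j+5, n+1))
          ((mem_g4 h4 _).mpr (by norm_num; omega)) ((mem_g4 h4 _).mpr (by norm_num; omega))
          (ne_pair (by omega)) (Or.inl (by norm_num; omega)) (Or.inl (by norm_num; omega)))
    · exact absurd (by right; left; exact h) hyg
    · exact absurd (by right; right; left; exact h) hyg

lemma mem_F1 {n : ℕ} {x y w : ℕ × ℕ} (hw : w ∈ Sn n) (hwx : w ≠ x) :
    w ∈ insert y ((Sn n).erase x) :=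
  Finset.mem_insert_of_mem (Finset.mem_erase.mpr ⟨hwx, hw⟩)

-- forcing at stage 0: uses data of steps 0, 1, 2
lemma forc0 {n : ℕ} {x y x1 y1 x2 : ℕ × ℕ} (hn : 8 ≤ n)
    (hx : x ∈ Sn n) (hyS : y ∉ Sn n) (hyT : y ∉ Tn n)
    (ht1 : IsTriangulation n (insert y ((Sn n).erase x)))
    (hy1T : y1 ∈ Tn n)
    (ht2 : IsTriangulation n (insert y1 ((insert y ((Sn n).erase x)).erase x1)))
    {y2 : ℕ × ℕ} (hy2T : y2 ∈ Tn n)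
    (hy2f : y2 ∉ insert y1 ((insert y ((Sn n).erase x)).erase x1))
    (ht3 : IsTriangulation n
      (insert y2 ((insert y1 ((insert y ((Sn n).erase x)).erase x1)).erase x2))) :
    x = (3,5) ∧ y = (4, n+1) := by
  have compat1 := compat_of_tri ht1
  have compat2 := compat_of_tri ht2
  have m1 : ((1:ℕ), n+1) ∈ Sn n := (mem_Sn _).mpr (by norm_num; omega)
  have m2 : ((2:ℕ), n+1) ∈ Sn n := (mem_Sn _).mpr (by norm_num; omega)
  have m3 : ((3:ℕ), n+1) ∈ Sn n := (mem_Sn _).mpr (by norm_num; omega)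
  have m35 : ((3:ℕ), (5:ℕ)) ∈ Sn n := (mem_Sn _).mpr (by norm_num)
  have hy1 : y1 = (2, 4) := by
    have htT := (mem_Tn y1).mp hy1T
    rcases htT with h | h | h
    · exfalso
      have c1 : Crosses y1 (1, n+1) := Or.inl (by norm_num; omega)
      have c2 : Crosses y1 (2, n+1) := Or.inl (by norm_num; omega)
      have c3 : Crosses y1 (3, n+1) := Or.inl (by norm_num; omega)
      rcases eq_or_ne x (1, n+1) with rfl | hx1
      · exact block_two (mem_F1 m2 (ne_pair (by omega))) (mem_F1 m3 (ne_pair (by omega)))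
          (ne_pair (by omega)) c2 c3 ht2
      · rcases eq_or_ne x (2, n+1) with rfl | hx2
        · exact block_two (mem_F1 m1 (ne_pair (by omega))) (mem_F1 m3 (ne_pair (by omega)))
            (ne_pair (by omega)) c1 c3 ht2
        · exact block_two (mem_F1 m1 (fun h => hx1 h.symm))
            (mem_F1 m2 (fun h => hx2 h.symm)) (ne_pair (by omega)) c1 c2 ht2
    · exfalso
      have c2 : Crosses y1 (2, n+1) := Or.inl (by norm_num; omega)
      have c3 : Crosses y1 (3, n+1) := Or.inl (by norm_num; omega)
      have c35 : Crosses y1 (3, 5) := Or.inl (by norm_num; omega)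
      rcases eq_or_ne x (2, n+1) with rfl | hx1
      · exact block_two (mem_F1 m3 (ne_pair (by omega))) (mem_F1 m35 (ne_pair (by omega)))
          (ne_pair (by omega)) c3 c35 ht2
      · rcases eq_or_ne x (3, n+1) with rfl | hx2
        · exact block_two (mem_F1 m2 (ne_pair (by omega))) (mem_F1 m35 (ne_pair (by omega)))
            (ne_pair (by omega)) c2 c35 ht2
        · exact block_two (mem_F1 m2 (fun h => hx1 h.symm))
            (mem_F1 m3 (fun h => hx2 h.symm)) (ne_pair (by omega)) c2 c3 ht2
    · exact eq_pair h.1 h.2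
  subst hy1
  have c24_3 : Crosses ((2:ℕ),(4:ℕ)) (3, n+1) := Or.inl (by norm_num; omega)
  have c24_35 : Crosses ((2:ℕ),(4:ℕ)) (3, 5) := Or.inl (by norm_num)
  have hxcase : x = (3,5) ∨ x = (3,n+1) := by
    by_contra hcon
    push_neg at hcon
    exact block_two (mem_F1 m3 (fun h => hcon.2 h.symm)) (mem_F1 m35 (fun h => hcon.1 h.symm))
      (ne_pair (by omega)) c24_3 c24_35 ht2
  have hydiag : IsDiagonal n y := ht1.2.1 y (Finset.mem_insert_self _ _)
  rcases hxcase with rfl | rfl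
  · exact ⟨rfl, L1 hn hydiag hyS (fun w hw hwx => compat1 w hw hwx)⟩
  · exfalso
    have hy25 : y = (2, 5) := L2 hn hydiag hyS (fun w hw hwx => compat1 w hw hwx)
    subst hy25
    have hx1 : x1 = (3, 5) := by
      by_contra hne
      exact compat2 (3, 5) (mem_F1 m35 (ne_pair (by omega))) (fun h => hne h.symm) c24_35
    subst hx1
    have compat3 := compat_of_tri ht3
    have mem_F2 : ∀ w : ℕ × ℕ, w ∈ Sn n → w ≠ (3, n+1) → w ≠ ((3:ℕ),(5:ℕ)) →
        w ∈ insert ((2:ℕ),(4:ℕ)) ((insert ((2:ℕ),(5:ℕ)) ((Sn n).erase (3, n+1))).erase (3, 5)) := by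
      intro w hw h1 h2
      exact Finset.mem_insert_of_mem (Finset.mem_erase.mpr
        ⟨h2, Finset.mem_insert_of_mem (Finset.mem_erase.mpr ⟨h1, hw⟩)⟩)
    have m25 : ((2:ℕ),(5:ℕ)) ∈
        insert ((2:ℕ),(4:ℕ)) ((insert ((2:ℕ),(5:ℕ)) ((Sn n).erase (3, n+1))).erase (3, 5)) := by
      refine Finset.mem_insert_of_mem (Finset.mem_erase.mpr ⟨ne_pair (by omega), ?_⟩)
      exact Finset.mem_insert_self _ _
    have htT := (mem_Tn y2).mp hy2T
    rcases htT with h | h | h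
    · have c1 : Crosses y2 (1, n+1) := Or.inl (by norm_num; omega)
      have c2 : Crosses y2 (2, n+1) := Or.inl (by norm_num; omega)
      exact block_two (mem_F2 _ m1 (ne_pair (by omega)) (ne_pair (by omega)))
        (mem_F2 _ m2 (ne_pair (by omega)) (ne_pair (by omega)))
        (ne_pair (by omega)) c1 c2 ht3
    · have c1 : Crosses y2 (2, n+1) := Or.inl (by norm_num; omega)
      have c2 : Crosses y2 (2, 5) := Or.inl (by norm_num; omega)
      exact block_two (mem_F2 _ m2 (ne_pair (by omega)) (ne_pair (by omega))) m25
        (ne_pair (by omega)) c1 c2 ht3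
    · exact hy2f (eq_pair h.1 h.2 ▸ Finset.mem_insert_self _ _)

lemma unique_path {n : ℕ} (hn : 8 ≤ n) {f : ℕ → Finset (ℕ × ℕ)}
    (hf : IsFlipPath n n f (Sn n) (Tn n)) : ∀ i ≤ n, f i = gpath n i := by
  obtain ⟨hf0, hfn, hstep⟩ := hf
  obtain ⟨x0, y0, hx0, hy0, hy0B, hr0⟩ := flip_repr_of_adj (hstep 0 (by omega))
  rw [hf0] at hx0 hy0 hr0
  have ht1 : IsTriangulation n (f 1) := (hstep 0 (by omega)).2.1
  have hy0T : y0 ∉ Tn n := by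
    intro hyT
    have hx0T : x0 ∉ Tn n := fun h => by
      have : x0 ∈ Sn n ∩ Tn n := Finset.mem_inter.mpr ⟨hx0, h⟩
      rw [Sn_inter_Tn hn] at this; simp at this
    exact noOneOff hn x0 hx0 ⟨hx0, hx0T, y0, hyT, hy0, by rw [← hr0]; exact ht1⟩
  have hcount : ∀ i, 1 ≤ i → i ≤ n → (Tn n \ f i).card = n - i := by
    intro i h1 h2
    have hTf1 : Tn n \ f 1 = Tn n := by
      ext e
      simp only [Finset.mem_sdiff, and_iff_left_iff_imp]
      intro he
      rw [hr0]
      intro hef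
      rcases Finset.mem_insert.mp hef with rfl | hef
      · exact hy0T he
      · have heS := Finset.mem_of_mem_erase hef
        have : e ∈ Sn n ∩ Tn n := Finset.mem_inter.mpr ⟨heS, he⟩
        rw [Sn_inter_Tn hn] at this; simp at this
    have hup := count_path ⟨hf0, hfn, hstep⟩ (Tn n) i n h2 le_rfl
    have hlow := count_path ⟨hf0, hfn, hstep⟩ (Tn n) 1 i h1 h2
    rw [hTf1, card_Tn hn] at hlow
    rw [hfn, Finset.sdiff_self, Finset.card_empty] at hup
    omega
  have hdata : ∀ i, 1 ≤ i → i < n → ∃ x y, x ∈ f i ∧ y ∈ Tn n ∧ y ∉ f i ∧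
      f (i+1) = insert y ((f i).erase x) := by
    intro i h1 h2
    obtain ⟨x, y, hx, hy, hyB, hr⟩ := flip_repr_of_adj (hstep i h2)
    have hyT : y ∈ Tn n := by
      by_contra hyT
      have hsub : Tn n \ f i ⊆ Tn n \ f (i+1) := by
        intro e he
        rw [Finset.mem_sdiff] at he ⊢
        refine ⟨he.1, fun hef => ?_⟩
        rw [hr] at hef
        rcases Finset.mem_insert.mp hef with rfl | hef
        · exact hyT he.1
        · exact he.2 (Finset.mem_of_mem_erase hef)
      have := Finset.card_le_card hsub
      rw [hcount i h1 (by omega), hcount (i+1) (by omega) (by omega)] at this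
      omega
    exact ⟨x, y, hx, hyT, hy, hr⟩
  intro i
  induction i with
  | zero => exact fun _ => hf0
  | succ i ih =>
    intro hi
    rcases Nat.eq_zero_or_pos i with rfl | hipos
    · -- f 1 = gpath n 1
      obtain ⟨x1, y1, hx1, hy1T, hy1f, hr1⟩ := hdata 1 le_rfl (by omega)
      obtain ⟨x2, y2, hx2, hy2T, hy2f, hr2⟩ := hdata 2 (by omega) (by omega)
      rw [hr0] at hr1
      have ht1' : IsTriangulation n (insert y0 ((Sn n).erase x0)) := by
        rw [← hr0]; exact ht1
      have ht2 : IsTriangulation n (insert y1 ((insert y0 ((Sn n).erase x0)).erase x1)) := by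
        rw [← hr1]; exact (hstep 1 (by omega)).2.1
      have ht3 : IsTriangulation n
          (insert y2 ((insert y1 ((insert y0 ((Sn n).erase x0)).erase x1)).erase x2)) := by
        rw [← hr1, ← hr2]; exact (hstep 2 (by omega)).2.1
      rw [hr1] at hy2f
      obtain ⟨hx35, hy4⟩ := forc0 hn hx0 hy0 hy0T ht1' hy1T ht2 hy2T hy2f ht3
      have hsr := (step_repr hn (show 0 < n by omega)).2.2
      rw [xe0, ye0, show gpath n 0 = Sn n from rfl] at hsr
      rw [hr0, hx35, hy4]
      exact hsr.symm
    · have hfi := ih (by omega)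
      obtain ⟨x, y, hx, hyT, hyf, hr⟩ := hdata i hipos (by omega)
      rw [hfi] at hx hyf hr
      have htri : IsTriangulation n (insert y ((gpath n i).erase x)) := by
        rw [← hr]; exact (hstep i (by omega)).2.1
      obtain ⟨hy', hx'⟩ := forc_step hn hipos (by omega) hyT hyf hx htri
      rw [hy', hx'] at hr
      rw [hr]
      exact ((step_repr hn (by omega)).2.2).symm

lemma conflicts_insert_s11 {S T : Finset (ℕ × ℕ)} {a : ℕ × ℕ} (ha : a ∉ S) :
    conflicts (insert a S) T = (T.filter fun t => Crosses a t).card + conflicts S T := by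
  have hsplit : (insert a S) ×ˢ T = (T.image fun b => (a, b)) ∪ S ×ˢ T := by
    ext ⟨u, v⟩
    simp only [Finset.mem_product, Finset.mem_insert, Finset.mem_image, Finset.mem_union,
      Prod.mk.injEq]
    constructor
    · rintro ⟨(rfl | h), hv⟩
      · exact Or.inl ⟨v, hv, rfl, rfl⟩
      · exact Or.inr ⟨h, hv⟩
    · rintro (⟨b, hb, rfl, rfl⟩ | ⟨h, hv⟩)
      · exact ⟨Or.inl rfl, hb⟩
      · exact ⟨Or.inr h, hv⟩
  rw [conflicts, hsplit, Finset.filter_union, Finset.card_union_of_disjoint, Finset.filter_image]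
  · rw [Finset.card_image_of_injective _ (fun u v h => by simpa using h)]
    rfl
  · simp only [Finset.disjoint_left, Finset.mem_filter, Finset.mem_image, Finset.mem_product]
    rintro e ⟨⟨b, _, rfl⟩, _⟩ ⟨⟨he1, _⟩, _⟩
    exact ha he1

lemma conflicts_erase {S T : Finset (ℕ × ℕ)} {x : ℕ × ℕ} (hx : x ∈ S) :
    conflicts S T = (T.filter fun t => Crosses x t).card + conflicts (S.erase x) T := by
  conv_lhs => rw [← Finset.insert_erase hx]
  exact conflicts_insert_s11 (Finset.notMem_erase _ _)

lemma filt45 {n : ℕ} (hn : 8 ≤ n) :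
    ((Tn n).filter fun t => Crosses (4, n+1) t).card = n - 4 := by
  have heq : ((Tn n).filter fun t => Crosses (4, n+1) t)
      = (Finset.Icc 5 n).image (fun j => ((0:ℕ), j)) := by
    ext e
    simp only [Finset.mem_filter, mem_Tn, Finset.mem_image, Finset.mem_Icc]
    constructor
    · rintro ⟨hT, hc⟩
      unfold Crosses at hc
      dsimp only at hc
      refine ⟨e.2, by omega, (eq_pair (by omega) rfl).symm⟩
    · rintro ⟨j, hj, rfl⟩
      exact ⟨by left; norm_num; omega, Or.inr (by norm_num; omega)⟩
  rw [heq, Finset.card_image_of_injective _ (mkinj' _), Nat.card_Icc]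
  omega

lemma filt35 {n : ℕ} (hn : 8 ≤ n) :
    ((Tn n).filter fun t => Crosses (3, 5) t).card = 3 := by
  have heq : ((Tn n).filter fun t => Crosses (3, 5) t)
      = ({(0,4),(1,4),(2,4)} : Finset (ℕ × ℕ)) := by
    ext e
    simp only [Finset.mem_filter, mem_Tn, Finset.mem_insert, Finset.mem_singleton, Prod.ext_iff]
    unfold Crosses
    dsimp only
    omega
  rw [heq]
  decide

lemma conflicts_first {n : ℕ} (hn : 8 ≤ n) :
    conflicts (gpath n 1) (Tn n) = conflicts (Sn n) (Tn n) + (n - 7) := by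
  have hsr := step_repr (i := 0) hn (by omega)
  rw [xe0, ye0, show gpath n 0 = Sn n from rfl] at hsr
  obtain ⟨hx35, hy45, hrepr⟩ := hsr
  have h1 : conflicts (gpath n 1) (Tn n)
      = ((Tn n).filter fun t => Crosses (4, n+1) t).card
        + conflicts ((Sn n).erase (3,5)) (Tn n) := by
    rw [hrepr]
    exact conflicts_insert_s11 (fun h => hy45 (Finset.mem_of_mem_erase h))
  have h2 := conflicts_erase (T := Tn n) hx35
  rw [h1, filt45 hn, h2, filt35 hn]
  omega


/-- For every `n ≥ 8` there are triangulations `S`, `T` of size `n` with no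
common edges and no one-off edges, with `d(S,T) = n`, a unique geodesic
from `S` to `T`, and every geodesic from `S` to `T` begins with a flip
increasing the number of conflicts with `T` by exactly `n - 7`. -/
theorem stmt11 :
    ∀ n : ℕ, 8 ≤ n → ∃ S T : Finset (ℕ × ℕ),
      IsTriangulation n S ∧ IsTriangulation n T ∧
      S ∩ T = ∅ ∧
      (∀ e ∈ S, ¬ OneOff n S T e) ∧
      flipDist n S T = n ∧
      (∃ f : ℕ → Finset (ℕ × ℕ), IsGeodesic n n f S T) ∧
      (∀ (k l : ℕ) (f g : ℕ → Finset (ℕ × ℕ)), IsGeodesic n k f S T →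
        IsGeodesic n l g S T → k = l ∧ ∀ i ≤ k, f i = g i) ∧
      (∀ (k : ℕ) (f : ℕ → Finset (ℕ × ℕ)), IsGeodesic n k f S T →
        conflicts (f 1) T = conflicts S T + (n - 7)) := by
  intro n hn
  refine ⟨Sn n, Tn n, tri_Sn hn, tri_Tn hn, Sn_inter_Tn hn, noOneOff hn, flipDist_eq hn,
    ⟨gpath n, path_gn hn, (flipDist_eq hn).symm⟩, ?_, ?_⟩
  · intro k l f g hf hg
    have hk : k = n := hf.2.trans (flipDist_eq hn)
    have hl : l = n := hg.2.trans (flipDist_eq hn)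
    subst hk; subst hl
    refine ⟨rfl, fun i hi => ?_⟩
    rw [unique_path hn hf.1 i hi, unique_path hn hg.1 i hi]
  · intro k f hf
    have hk : k = n := hf.2.trans (flipDist_eq hn)
    subst hk
    rw [unique_path hn hf.1 1 (by omega)]
    exact conflicts_first hn
end
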